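/- arXiv:2603.23444 — 2 statements merged into one kernel-verified Lean document; each statement's English description precedes it below -/
import Mathlib

section
/- Under the hypotheses of the projected overlap bound, suppose additionally that H_P is a positive semidefinite Hermitian operator whose kernel is exactly the range of Π_S, whose smallest positive eigenvalue is at least λ2 > 0, and whose largest eigenvalue is at most λ_P. Set p = ⟨ψ|H_P|ψ⟩. If S1⊤ < S1, then |⟨ψ|E0⟩|² ≥ (S1 − E)/(S1 − E0) − (p/λ2)·(S1 − S1⊤)/(S1 − E0); otherwise |⟨ψ|E0⟩|² ≥ (S1 − E)/(S1 − E0) − (p/λ_P)·(S1 − S1⊤)/(S1 − E0). -/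
/-!
Split `ψ = a ψ₀ + y + u` with `a = ⟨ψ₀|ψ⟩`, `y = Π_S ψ - a ψ₀` and `u = ψ - Π_S ψ`. Since `H`
commutes with `Π_S` and `ψ₀` is an eigenvector, both the norm and the energy split additively:
`1 = |a|² + ‖y‖² + ‖u‖²` and `E = |a|² E₀ + ⟨y|H|y⟩ + ⟨u|H|u⟩ ≥ |a|² E₀ + S₁ ‖y‖² + S₁⊤ ‖u‖²`,
so `|a|² (S₁ - E₀) ≥ S₁ - E - (S₁ - S₁⊤) ‖u‖²`. The penalty only sees the leakage `u`, and
`u ⊥ ker H_P`, so `λ₂ ‖u‖² ≤ p ≤ λ_P ‖u‖²`; this bounds `‖u‖²` from the side needed by the sign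
of `S₁ - S₁⊤`.
-/

open scoped ComplexOrder

open Matrix

section DotProduct

variable {m : Type*} [Fintype m]

theorem Matrix.IsHermitian.star_mulVec_dotProduct {A : Matrix m m ℂ} (hA : A.IsHermitian)
    (v w : m → ℂ) : star (A *ᵥ v) ⬝ᵥ w = star v ⬝ᵥ A *ᵥ w := by
  rw [dotProduct_mulVec, star_mulVec, hA.eq]

theorem star_dotProduct_self_eq_re (v : m → ℂ) : star v ⬝ᵥ v = ((star v ⬝ᵥ v).re : ℂ) :=
  Complex.eq_re_of_ofReal_le (r := 0) (by simp [dotProduct_star_self_nonneg v])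

theorem star_smul_dotProduct_smul (c : ℂ) (v w : m → ℂ) :
    star (c • v) ⬝ᵥ (c • w) = (Complex.normSq c : ℂ) * (star v ⬝ᵥ w) := by
  rw [star_smul, smul_dotProduct, dotProduct_smul, Complex.normSq_eq_conj_mul_self]
  simp only [smul_eq_mul, Complex.star_def]
  ring

theorem Matrix.IsHermitian.re_star_add_dotProduct_mulVec_add {A : Matrix m m ℂ}
    (hA : A.IsHermitian) {v w : m → ℂ} (h : star v ⬝ᵥ A *ᵥ w = 0) :
    (star (v + w) ⬝ᵥ A *ᵥ (v + w)).re = (star v ⬝ᵥ A *ᵥ v).re + (star w ⬝ᵥ A *ᵥ w).re := by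
  have h' : star w ⬝ᵥ A *ᵥ v = 0 := by
    rw [← hA.star_mulVec_dotProduct, star_dotProduct, h, star_zero]
  simp [star_add, mulVec_add, add_dotProduct, dotProduct_add, h, h']

theorem star_dotProduct_mulVec_eq_zero_of_commute {A P : Matrix m m ℂ} (hP : P.IsHermitian)
    (hAP : Commute A P) {v w : m → ℂ} (hv : P *ᵥ v = v) (hw : P *ᵥ w = 0) :
    star v ⬝ᵥ A *ᵥ w = 0 := by
  rw [← hv, hP.star_mulVec_dotProduct, mulVec_mulVec, ← hAP.eq, ← mulVec_mulVec, hw,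
    mulVec_zero, dotProduct_zero]

theorem le_re_dotProduct_mulVec_of_forall_unit {A : Matrix m m ℂ} {S : ℝ}
    {C : (m → ℂ) → Prop} (hC : ∀ φ, star φ ⬝ᵥ φ = 1 → C φ → S ≤ (star φ ⬝ᵥ A *ᵥ φ).re)
    {y : m → ℂ} (hy : ∀ c : ℂ, C (c • y)) :
    S * (star y ⬝ᵥ y).re ≤ (star y ⬝ᵥ A *ᵥ y).re := by
  rcases eq_or_ne y 0 with rfl | hy0
  · simp
  set t := (star y ⬝ᵥ y).re
  have ht : 0 < t := (Complex.pos_iff.mp (dotProduct_star_self_pos_iff.mpr hy0)).1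
  set c : ℂ := (((√t)⁻¹ : ℝ) : ℂ)
  have hc : Complex.normSq c = t⁻¹ := by
    rw [Complex.normSq_ofReal, ← mul_inv, Real.mul_self_sqrt ht.le]
  have hunit : star (c • y) ⬝ᵥ (c • y) = 1 := by
    rw [star_smul_dotProduct_smul, hc, star_dotProduct_self_eq_re, ← Complex.ofReal_mul,
      inv_mul_cancel₀ ht.ne', Complex.ofReal_one]
  have hS := hC _ hunit (hy c)
  rwa [mulVec_smul, star_smul_dotProduct_smul, hc, Complex.re_ofReal_mul, inv_mul_eq_div,
    le_div_iff₀ ht] at hS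

theorem OrthonormalBasis.star_dotProduct_eq_sum (b : OrthonormalBasis m ℂ (EuclideanSpace ℂ m))
    (u v : m → ℂ) :
    star u ⬝ᵥ v = ∑ i, star (star ⇑(b i) ⬝ᵥ u) * (star ⇑(b i) ⬝ᵥ v) := by
  have := b.sum_inner_mul_inner (WithLp.toLp 2 u) (WithLp.toLp 2 v)
  simp only [EuclideanSpace.inner_eq_star_dotProduct] at this
  rw [dotProduct_comm, ← this]
  refine Finset.sum_congr rfl fun i _ => ?_
  rw [dotProduct_comm _ (star u), dotProduct_comm v, star_dotProduct u]

theorem OrthonormalBasis.star_dotProduct_self_eq_sum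
    (b : OrthonormalBasis m ℂ (EuclideanSpace ℂ m)) (u : m → ℂ) :
    star u ⬝ᵥ u = ((∑ i, Complex.normSq (star ⇑(b i) ⬝ᵥ u) : ℝ) : ℂ) := by
  push_cast
  simp only [b.star_dotProduct_eq_sum u u, Complex.normSq_eq_conj_mul_self, Complex.star_def]

end DotProduct

namespace Matrix.IsHermitian

variable {m : Type*} [Fintype m] [DecidableEq m] {A : Matrix m m ℂ} (hA : A.IsHermitian)
include hA

theorem mulVec_eigenvectorBasis_eq_ofReal_smul (i : m) :
    A *ᵥ ⇑(hA.eigenvectorBasis i) = (hA.eigenvalues i : ℂ) • ⇑(hA.eigenvectorBasis i) := by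
  rw [hA.mulVec_eigenvectorBasis, Complex.coe_smul]

theorem eigenvectorBasis_ne_zero (i : m) : ⇑(hA.eigenvectorBasis i) ≠ 0 := fun h =>
  hA.eigenvectorBasis.orthonormal.ne_zero i (by simpa using congrArg (WithLp.toLp 2) h)

theorem star_dotProduct_mulVec_self_eq_sum (u : m → ℂ) :
    star u ⬝ᵥ A *ᵥ u =
      ((∑ i, hA.eigenvalues i * Complex.normSq (star ⇑(hA.eigenvectorBasis i) ⬝ᵥ u) : ℝ) : ℂ) := by
  push_cast
  rw [hA.eigenvectorBasis.star_dotProduct_eq_sum]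
  refine Finset.sum_congr rfl fun i _ => ?_
  rw [← hA.star_mulVec_dotProduct, hA.mulVec_eigenvectorBasis_eq_ofReal_smul, star_smul,
    smul_dotProduct, Complex.normSq_eq_conj_mul_self, Complex.star_def, smul_eq_mul,
    Complex.conj_ofReal]
  ring

theorem re_dotProduct_mulVec_le {lam : ℝ}
    (hmax : ∀ (μ : ℝ) (v : m → ℂ), v ≠ 0 → A *ᵥ v = (μ : ℂ) • v → μ ≤ lam) (u : m → ℂ) :
    (star u ⬝ᵥ A *ᵥ u).re ≤ lam * (star u ⬝ᵥ u).re := by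
  rw [hA.star_dotProduct_mulVec_self_eq_sum, hA.eigenvectorBasis.star_dotProduct_self_eq_sum,
    Complex.ofReal_re, Complex.ofReal_re, Finset.mul_sum]
  refine Finset.sum_le_sum fun i _ => mul_le_mul_of_nonneg_right ?_ (Complex.normSq_nonneg _)
  exact hmax _ _ (hA.eigenvectorBasis_ne_zero i) (hA.mulVec_eigenvectorBasis_eq_ofReal_smul i)

theorem le_re_dotProduct_mulVec {lam : ℝ}
    (hmin : ∀ (μ : ℝ) (v : m → ℂ), v ≠ 0 → A *ᵥ v = (μ : ℂ) • v → μ = 0 ∨ lam ≤ μ)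
    {u : m → ℂ} (hu : ∀ v, A *ᵥ v = 0 → star v ⬝ᵥ u = 0) :
    lam * (star u ⬝ᵥ u).re ≤ (star u ⬝ᵥ A *ᵥ u).re := by
  rw [hA.star_dotProduct_mulVec_self_eq_sum, hA.eigenvectorBasis.star_dotProduct_self_eq_sum,
    Complex.ofReal_re, Complex.ofReal_re, Finset.mul_sum]
  refine Finset.sum_le_sum fun i _ => ?_
  have hi := hA.mulVec_eigenvectorBasis_eq_ofReal_smul i
  rcases hmin _ _ (hA.eigenvectorBasis_ne_zero i) hi with h0 | hle
  · have : star ⇑(hA.eigenvectorBasis i) ⬝ᵥ u = 0 := hu _ (by rw [hi, h0]; simp)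
    simp [this, h0]
  · exact mul_le_mul_of_nonneg_right hle (Complex.normSq_nonneg _)

end Matrix.IsHermitian

section Projection

variable {m : Type*} [Fintype m] {P : Matrix m m ℂ}

theorem mulVec_mulVec_of_isIdempotentElem (hProj : IsIdempotentElem P) (v : m → ℂ) :
    P *ᵥ (P *ᵥ v) = P *ᵥ v := by
  rw [mulVec_mulVec, hProj.eq]

theorem mulVec_sub_mulVec_of_isIdempotentElem (hProj : IsIdempotentElem P) (v : m → ℂ) :
    P *ᵥ (v - P *ᵥ v) = 0 := by
  rw [mulVec_sub, mulVec_mulVec_of_isIdempotentElem hProj, sub_self]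

theorem star_dotProduct_mulVec_sub_smul (hP : P.IsHermitian) {ψ₀ : m → ℂ}
    (hψ₀P : P *ᵥ ψ₀ = ψ₀) (hψ₀ : star ψ₀ ⬝ᵥ ψ₀ = 1) (ψ : m → ℂ) :
    star ψ₀ ⬝ᵥ (P *ᵥ ψ - (star ψ₀ ⬝ᵥ ψ) • ψ₀) = 0 := by
  rw [dotProduct_sub, ← hP.star_mulVec_dotProduct, hψ₀P, dotProduct_smul, hψ₀, smul_eq_mul,
    mul_one, sub_self]

theorem re_star_dotProduct_mulVec_decompose (hP : P.IsHermitian) (hProj : IsIdempotentElem P)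
    {ψ₀ : m → ℂ} (hψ₀P : P *ᵥ ψ₀ = ψ₀) (hψ₀ : star ψ₀ ⬝ᵥ ψ₀ = 1)
    {A : Matrix m m ℂ} (hA : A.IsHermitian) (hAP : Commute A P) {e : ℝ}
    (hAψ₀ : A *ᵥ ψ₀ = (e : ℂ) • ψ₀) (ψ : m → ℂ) :
    (star ψ ⬝ᵥ A *ᵥ ψ).re = Complex.normSq (star ψ₀ ⬝ᵥ ψ) * e
      + (star (P *ᵥ ψ - (star ψ₀ ⬝ᵥ ψ) • ψ₀) ⬝ᵥ A *ᵥ (P *ᵥ ψ - (star ψ₀ ⬝ᵥ ψ) • ψ₀)).re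
      + (star (ψ - P *ᵥ ψ) ⬝ᵥ A *ᵥ (ψ - P *ᵥ ψ)).re := by
  set a := star ψ₀ ⬝ᵥ ψ
  have hy := star_dotProduct_mulVec_sub_smul hP hψ₀P hψ₀ ψ
  have hsplit := hA.re_star_add_dotProduct_mulVec_add (star_dotProduct_mulVec_eq_zero_of_commute
    hP hAP (mulVec_mulVec_of_isIdempotentElem hProj ψ)
    (mulVec_sub_mulVec_of_isIdempotentElem hProj ψ))
  have hsplitP := hA.re_star_add_dotProduct_mulVec_add (v := a • ψ₀)
    (w := P *ᵥ ψ - a • ψ₀) (by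
      rw [star_smul, smul_dotProduct, ← hA.star_mulVec_dotProduct, hAψ₀, star_smul,
        smul_dotProduct, hy, smul_zero, smul_zero])
  have hψ₀part : (star (a • ψ₀) ⬝ᵥ A *ᵥ (a • ψ₀)).re = Complex.normSq a * e := by
    rw [mulVec_smul, star_smul_dotProduct_smul, hAψ₀, dotProduct_smul, hψ₀]
    simp
  rw [add_sub_cancel] at hsplit hsplitP
  rw [hsplit, hsplitP, hψ₀part]

theorem re_star_dotProduct_mulVec_eq_sub_mulVec {HP : Matrix m m ℂ}
    (hHP : HP.IsHermitian) (hProj : IsIdempotentElem P) (hker : ∀ v, P *ᵥ v = v → HP *ᵥ v = 0)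
    (ψ : m → ℂ) :
    (star ψ ⬝ᵥ HP *ᵥ ψ).re = (star (ψ - P *ᵥ ψ) ⬝ᵥ HP *ᵥ (ψ - P *ᵥ ψ)).re := by
  have hPψ := hker _ (mulVec_mulVec_of_isIdempotentElem hProj ψ)
  have hsplit := hHP.re_star_add_dotProduct_mulVec_add (v := P *ᵥ ψ) (w := ψ - P *ᵥ ψ) (by
    rw [← hHP.star_mulVec_dotProduct, hPψ, star_zero, zero_dotProduct])
  rwa [add_sub_cancel, hPψ, dotProduct_zero, Complex.zero_re, zero_add] at hsplit

end Projection

theorem overlap_lower_bounds {E E0 S1 S1t q w p lam2 lamP : ℝ} (hgap : E0 < S1)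
    (henergy : S1 - E - (S1 - S1t) * w ≤ q * (S1 - E0)) (hw : 0 ≤ w) (hlam2 : 0 < lam2)
    (hlow : lam2 * w ≤ p) (hup : p ≤ lamP * w) :
    (S1t < S1 → (S1 - E) / (S1 - E0) - (p / lam2) * ((S1 - S1t) / (S1 - E0)) ≤ q) ∧
    (S1 ≤ S1t → (S1 - E) / (S1 - E0) - (p / lamP) * ((S1 - S1t) / (S1 - E0)) ≤ q) := by
  have hD : 0 < S1 - E0 := sub_pos.mpr hgap
  have key : ∀ c, (S1 - S1t) * w ≤ (S1 - S1t) * c →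
      (S1 - E) / (S1 - E0) - c * ((S1 - S1t) / (S1 - E0)) ≤ q := by
    intro c hc
    rw [mul_div_assoc', div_sub_div_same, div_le_iff₀ hD]
    linarith
  refine ⟨fun h => key _ (mul_le_mul_of_nonneg_left ?_ (by linarith)),
    fun h => key _ (mul_le_mul_of_nonpos_left ?_ (by linarith))⟩
  · rwa [le_div_iff₀ hlam2, mul_comm]
  · rcases le_or_gt lamP 0 with hP | hP
    · exact (div_nonpos_of_nonneg_of_nonpos ((mul_nonneg hlam2.le hw).trans hlow) hP).trans hw
    · rwa [div_le_iff₀ hP, mul_comm]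

theorem stmt2_general {n : ℕ} (H P : Matrix (Fin n) (Fin n) ℂ)
    (hH : H.IsHermitian) (hP : P.IsHermitian) (hProj : P * P = P)
    (hcomm : H * P = P * H)
    (E0 S1 S1t : ℝ) (ψ0 : Fin n → ℂ)
    (hψ0norm : star ψ0 ⬝ᵥ ψ0 = 1)
    (hψ0P : P.mulVec ψ0 = ψ0)
    (heig : H.mulVec ψ0 = (E0 : ℂ) • ψ0)
    (hS1lb : ∀ φ : Fin n → ℂ, star φ ⬝ᵥ φ = 1 → P.mulVec φ = φ → star ψ0 ⬝ᵥ φ = 0 →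
      S1 ≤ (star φ ⬝ᵥ H.mulVec φ).re)
    (hS1tlb : ∀ φ : Fin n → ℂ, star φ ⬝ᵥ φ = 1 → P.mulVec φ = 0 →
      S1t ≤ (star φ ⬝ᵥ H.mulVec φ).re)
    (hE0S1 : E0 < S1)
    (ψ : Fin n → ℂ) (hψ : star ψ ⬝ᵥ ψ = 1)
    (E : ℝ) (hE : star ψ ⬝ᵥ H.mulVec ψ = (E : ℂ))
    (HP : Matrix (Fin n) (Fin n) ℂ) (hHPherm : HP.IsHermitian)
    (hker : ∀ v : Fin n → ℂ, HP.mulVec v = 0 ↔ P.mulVec v = v)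
    (lam2 lamP : ℝ) (hlam2pos : 0 < lam2)
    (hmin : ∀ (μ : ℝ) (v : Fin n → ℂ), v ≠ 0 → HP.mulVec v = (μ : ℂ) • v →
      μ = 0 ∨ lam2 ≤ μ)
    (hmax : ∀ (μ : ℝ) (v : Fin n → ℂ), v ≠ 0 → HP.mulVec v = (μ : ℂ) • v → μ ≤ lamP)
    (p : ℝ) (hp : star ψ ⬝ᵥ HP.mulVec ψ = (p : ℂ)) :
    (S1t < S1 →
      (S1 - E) / (S1 - E0) - (p / lam2) * ((S1 - S1t) / (S1 - E0))
        ≤ ‖star ψ ⬝ᵥ ψ0‖ ^ 2) ∧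
    (S1 ≤ S1t →
      (S1 - E) / (S1 - E0) - (p / lamP) * ((S1 - S1t) / (S1 - E0))
        ≤ ‖star ψ ⬝ᵥ ψ0‖ ^ 2) := by
  have hnorm := re_star_dotProduct_mulVec_decompose hP hProj hψ0P hψ0norm isHermitian_one
    (Commute.one_left P) (e := 1) (by simp) ψ
  simp only [one_mulVec, hψ, Complex.one_re, mul_one] at hnorm
  have henergy := re_star_dotProduct_mulVec_decompose hP hProj hψ0P hψ0norm hH hcomm heig ψ
  rw [hE, Complex.ofReal_re] at henergy
  have hpen := re_star_dotProduct_mulVec_eq_sub_mulVec hHPherm hProj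
    (fun v => (hker v).2) ψ
  rw [hp, Complex.ofReal_re] at hpen
  have hψ0y := star_dotProduct_mulVec_sub_smul hP hψ0P hψ0norm ψ
  have hPu := mulVec_sub_mulVec_of_isIdempotentElem hProj ψ
  set y := P *ᵥ ψ - (star ψ0 ⬝ᵥ ψ) • ψ0
  set u := ψ - P *ᵥ ψ
  have hPy : P *ᵥ y = y := by
    rw [mulVec_sub, mulVec_mulVec_of_isIdempotentElem hProj, mulVec_smul, hψ0P]
  have hy : S1 * (star y ⬝ᵥ y).re ≤ (star y ⬝ᵥ H *ᵥ y).re :=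
    le_re_dotProduct_mulVec_of_forall_unit (C := fun φ => P *ᵥ φ = φ ∧ star ψ0 ⬝ᵥ φ = 0)
      (fun φ h1 h2 => hS1lb φ h1 h2.1 h2.2)
      fun c => ⟨by rw [mulVec_smul, hPy], by rw [dotProduct_smul, hψ0y, smul_zero]⟩
  have hu : S1t * (star u ⬝ᵥ u).re ≤ (star u ⬝ᵥ H *ᵥ u).re :=
    le_re_dotProduct_mulVec_of_forall_unit (C := fun φ => P *ᵥ φ = 0) hS1tlb
      fun c => by rw [mulVec_smul, hPu, smul_zero]
  have hu_perp : ∀ v, HP *ᵥ v = 0 → star v ⬝ᵥ u = 0 := fun v hv => by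
    simpa using star_dotProduct_mulVec_eq_zero_of_commute hP (Commute.one_left P)
      ((hker v).1 hv) hPu
  rw [star_dotProduct ψ, norm_star, Complex.sq_norm]
  exact overlap_lower_bounds hE0S1 (by linear_combination hy + hu - henergy + S1 * hnorm)
    (Complex.nonneg_iff.mp (dotProduct_star_self_nonneg u)).1 hlam2pos
    (hpen ▸ hHPherm.le_re_dotProduct_mulVec hmin hu_perp)
    (hpen ▸ hHPherm.re_dotProduct_mulVec_le hmax u)

/-- Theorem 3 (penalty-based overlap bound): same setting as the projected overlap bound,
with additionally a positive semidefinite penalty operator `HP` whose kernel is exactly the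
range of `P`, whose smallest positive eigenvalue is at least `lam2 > 0` and whose spectrum is
bounded above by `lamP`. With `p = ⟨ψ|HP|ψ⟩`: if `S1t < S1` then
`|⟨ψ|E0⟩|² ≥ (S1 − E)/(S1 − E0) − (p/lam2)(S1 − S1t)/(S1 − E0)`, otherwise
`|⟨ψ|E0⟩|² ≥ (S1 − E)/(S1 − E0) − (p/lamP)(S1 − S1t)/(S1 − E0)`. -/
theorem stmt2 {n : ℕ} (H P : Matrix (Fin n) (Fin n) ℂ)
    (hH : H.IsHermitian) (hP : P.IsHermitian) (hProj : P * P = P)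
    (hcomm : H * P = P * H)
    (E0 S1 S1t : ℝ) (ψ0 : Fin n → ℂ)
    (hψ0norm : star ψ0 ⬝ᵥ ψ0 = 1)
    (hψ0P : P.mulVec ψ0 = ψ0)
    (heig : H.mulVec ψ0 = (E0 : ℂ) • ψ0)
    (hS1lb : ∀ φ : Fin n → ℂ, star φ ⬝ᵥ φ = 1 → P.mulVec φ = φ → star ψ0 ⬝ᵥ φ = 0 →
      S1 ≤ (star φ ⬝ᵥ H.mulVec φ).re)
    (hS1att : ∃ φ : Fin n → ℂ, star φ ⬝ᵥ φ = 1 ∧ P.mulVec φ = φ ∧ star ψ0 ⬝ᵥ φ = 0 ∧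
      (star φ ⬝ᵥ H.mulVec φ).re = S1)
    (hS1tlb : ∀ φ : Fin n → ℂ, star φ ⬝ᵥ φ = 1 → P.mulVec φ = 0 →
      S1t ≤ (star φ ⬝ᵥ H.mulVec φ).re)
    (hS1tatt : ∃ φ : Fin n → ℂ, star φ ⬝ᵥ φ = 1 ∧ P.mulVec φ = 0 ∧
      (star φ ⬝ᵥ H.mulVec φ).re = S1t)
    (hE0S1 : E0 < S1)
    (ψ : Fin n → ℂ) (hψ : star ψ ⬝ᵥ ψ = 1)
    (E : ℝ) (hE : star ψ ⬝ᵥ H.mulVec ψ = (E : ℂ))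
    (HP : Matrix (Fin n) (Fin n) ℂ) (hHPherm : HP.IsHermitian) (hHPpsd : HP.PosSemidef)
    (hker : ∀ v : Fin n → ℂ, HP.mulVec v = 0 ↔ P.mulVec v = v)
    (lam2 lamP : ℝ) (hlam2pos : 0 < lam2)
    (hmin : ∀ (μ : ℝ) (v : Fin n → ℂ), v ≠ 0 → HP.mulVec v = (μ : ℂ) • v →
      μ = 0 ∨ lam2 ≤ μ)
    (hmax : ∀ (μ : ℝ) (v : Fin n → ℂ), v ≠ 0 → HP.mulVec v = (μ : ℂ) • v → μ ≤ lamP)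
    (p : ℝ) (hp : star ψ ⬝ᵥ HP.mulVec ψ = (p : ℂ)) :
    (S1t < S1 →
      (S1 - E) / (S1 - E0) - (p / lam2) * ((S1 - S1t) / (S1 - E0))
        ≤ ‖star ψ ⬝ᵥ ψ0‖ ^ 2) ∧
    (S1 ≤ S1t →
      (S1 - E) / (S1 - E0) - (p / lamP) * ((S1 - S1t) / (S1 - E0))
        ≤ ‖star ψ ⬝ᵥ ψ0‖ ^ 2) :=
  stmt2_general H P hH hP hProj hcomm E0 S1 S1t ψ0 hψ0norm hψ0P heig hS1lb hS1tlb hE0S1 ψ hψ E hE HP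
    hHPherm hker lam2 lamP hlam2pos hmin hmax p hp
end

section
/- Equivalence of Heisenberg and Schrödinger truncated propagation: fix a set S of monomial indices closed under the branching rules at cutoff ℓ. Define the truncated Heisenberg evolution of an observable H through a single gate U = exp(−iθM_γ/2) by keeping, for each anticommuting monomial, the branch i sin(θ) M_γ M_ν only if the resulting monomial lies in S, and the truncated Schrödinger evolution of a state ρ analogously with U replaced by U†. Then Tr[T_Schr(ρ) · H] = Tr[ρ · T_Heis(H)], where T_Heis and T_Schr are the truncated single-gate superoperators. -/
/-- Hamming weight of a binary vector. -/
def majWeight {K : ℕ} (ν : Fin K → Bool) : ℕ :=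
  (Finset.univ.filter (fun j => ν j = true)).card

/-- Inner product of binary vectors over the integers. -/
def majDot {K : ℕ} (ν μ : Fin K → Bool) : ℕ :=
  (Finset.univ.filter (fun j => ν j = true ∧ μ j = true)).card

/-- Index of the product monomial `M_γ M_ν` (bitwise xor). -/
def xorIdx {K : ℕ} (γ ν : Fin K → Bool) : Fin K → Bool := fun j => xor (γ j) (ν j)

/-- `M_γ` and `M_ν` anticommute iff `|γ||ν| − ⟨γ,ν⟩` is odd. -/
def anticIdx {K : ℕ} (γ ν : Fin K → Bool) : Bool :=
  (majWeight γ * majWeight ν - majDot γ ν) % 2 == 1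

/-- The Hermitian Majorana monomial
`M_ν = i^{|ν|(|ν|−1)/2} m_1^{ν_1} ⋯ m_K^{ν_K}` (ordered product). -/
noncomputable def MajMono {d K : ℕ} (m : Fin K → Matrix (Fin d) (Fin d) ℂ)
    (ν : Fin K → Bool) : Matrix (Fin d) (Fin d) ℂ :=
  (Complex.I ^ (majWeight ν * (majWeight ν - 1) / 2)) •
    ((List.finRange K).map (fun j => if ν j then m j else 1)).prod

/-- Truncated single-gate Heisenberg evolution of the monomial `M_ν` through
`U = exp(−iθ M_γ/2)`, retaining the branch `i sin θ · M_γ M_ν` only if `γ⊕ν ∈ S`. -/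
noncomputable def heisStep {d K : ℕ} (m : Fin K → Matrix (Fin d) (Fin d) ℂ)
    (γ : Fin K → Bool) (θ : ℝ) (S : Finset (Fin K → Bool)) (ν : Fin K → Bool) :
    Matrix (Fin d) (Fin d) ℂ :=
  if anticIdx γ ν then
    (Real.cos θ : ℂ) • MajMono m ν +
      (Complex.I * (Real.sin θ : ℂ) * (if xorIdx γ ν ∈ S then 1 else 0)) •
        (MajMono m γ * MajMono m ν)
  else MajMono m ν

/-- Truncated single-gate Schrödinger evolution (same rule with `θ ↦ −θ`). -/
noncomputable def schrStep {d K : ℕ} (m : Fin K → Matrix (Fin d) (Fin d) ℂ)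
    (γ : Fin K → Bool) (θ : ℝ) (S : Finset (Fin K → Bool)) (ν : Fin K → Bool) :
    Matrix (Fin d) (Fin d) ℂ :=
  if anticIdx γ ν then
    (Real.cos θ : ℂ) • MajMono m ν -
      (Complex.I * (Real.sin θ : ℂ) * (if xorIdx γ ν ∈ S then 1 else 0)) •
        (MajMono m γ * MajMono m ν)
  else MajMono m ν

/-!
A generator `m k` commutes or anticommutes with the monomial `M_ν`, with sign `(-1)^(|ν| - ν_k)`.
These signs multiply along products, so a product of monomials commutes with the generators
exactly like the monomial indexed by the xor of their indices. For even `K` every nonzero index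
has a generator anticommuting with it, and a matrix anticommuting with an involution is
traceless; hence `Tr(M_μ M_ν) = 0` for `μ ≠ ν` and `Tr(M_γ M_μ M_ν) = 0` unless `γ ⊕ μ = ν`.
Comparing both sides monomial by monomial, the cosine terms agree and the sine terms survive
only for `ν = γ ⊕ μ`; then both truncation indicators are `1` since `μ, ν ∈ S`, and
`M_μ M_γ = -M_γ M_μ` accounts for `θ ↦ -θ`.
-/

open Finset

lemma neg_one_pow_congr_zmod_two {R : Type*} [Ring R] {a b : ℕ} (h : (a : ZMod 2) = b) :
    (-1 : R) ^ a = (-1) ^ b := by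
  rw [neg_one_pow_eq_pow_mod_two, neg_one_pow_eq_pow_mod_two (n := b),
    (ZMod.natCast_eq_natCast_iff' a b 2).mp h]

lemma mul_list_prod_eq_smul {ι R A : Type*} [CommMonoid R] [Monoid A] [MulAction R A]
    [IsScalarTower R A A] [SMulCommClass R A A] (x : A) (f : ι → A) (c : ι → R) (L : List ι)
    (h : ∀ i ∈ L, x * f i = c i • (f i * x)) :
    x * (L.map f).prod = (L.map c).prod • ((L.map f).prod * x) := by
  induction L with
  | nil => simp
  | cons a L ih =>
    simp only [List.map_cons, List.prod_cons]
    rw [← mul_assoc, h a List.mem_cons_self, smul_mul_assoc, mul_assoc,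
      ih fun i hi => h i (List.mem_cons_of_mem a hi), mul_smul_comm, smul_smul, mul_assoc]

lemma Matrix.trace_eq_zero_of_mul_eq_neg {n R : Type*} [Fintype n] [DecidableEq n] [CommRing R]
    [NoZeroDivisors R] [CharZero R] {A B : Matrix n n R} (hB : B * B = 1)
    (h : B * A = -(A * B)) : A.trace = 0 := by
  have : A.trace = -A.trace := calc
    A.trace = (A * B * B).trace := by rw [mul_assoc, hB, mul_one]
    _ = (B * A * B).trace := by rw [Matrix.trace_mul_comm (A * B), mul_assoc]
    _ = -A.trace := by rw [h, neg_mul, Matrix.trace_neg, mul_assoc, hB, mul_one]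
  exact self_eq_neg.mp this

section Parity

variable {K : ℕ}

def majWeightExcept (ν : Fin K → Bool) (k : Fin K) : ℕ :=
  (Finset.univ.filter (fun j => ν j = true ∧ j ≠ k)).card

lemma xorIdx_comm (α β : Fin K → Bool) : xorIdx α β = xorIdx β α := by
  funext j; exact Bool.xor_comm _ _

lemma xorIdx_xorIdx_cancel_left (α β : Fin K → Bool) : xorIdx α (xorIdx α β) = β := by
  funext j; simp [xorIdx]

lemma boole_xorIdx (α β : Fin K → Bool) (j : Fin K) :
    (if xorIdx α β j = true then 1 else 0 : ZMod 2) =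
      (if α j = true then 1 else 0) + if β j = true then 1 else 0 := by
  unfold xorIdx
  cases α j <;> cases β j <;> decide

lemma majWeight_xorIdx (α β : Fin K → Bool) :
    (majWeight (xorIdx α β) : ZMod 2) = majWeight α + majWeight β := by
  simp only [majWeight, natCast_card_filter (R := ZMod 2), ← sum_add_distrib, boole_xorIdx]

lemma majDot_xorIdx (γ α β : Fin K → Bool) :
    (majDot γ (xorIdx α β) : ZMod 2) = majDot γ α + majDot γ β := by
  simp only [majDot, natCast_card_filter (R := ZMod 2), ← sum_add_distrib]
  refine sum_congr rfl fun j _ => ?_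
  unfold xorIdx
  cases γ j <;> cases α j <;> cases β j <;> decide

lemma majDot_self (γ : Fin K → Bool) : majDot γ γ = majWeight γ := by
  simp [majDot, majWeight]

lemma majWeightExcept_cast (ν : Fin K → Bool) (k : Fin K) :
    (majWeightExcept ν k : ZMod 2) = majWeight ν + if ν k = true then 1 else 0 := by
  have pointwise : ∀ j, (if ν j = true ∧ j ≠ k then 1 else 0 : ZMod 2) =
      (if ν j = true then 1 else 0) + if j = k then (if ν j = true then 1 else 0) else 0 := by
    intro j
    by_cases hj : j = k <;> cases ν j <;> simp [hj]
    decide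
  simp only [majWeightExcept, majWeight, natCast_card_filter (R := ZMod 2), pointwise,
    sum_add_distrib, sum_ite_eq', mem_univ, if_true]

lemma majWeightExcept_xorIdx (α β : Fin K → Bool) (k : Fin K) :
    (majWeightExcept (xorIdx α β) k : ZMod 2) = majWeightExcept α k + majWeightExcept β k := by
  simp only [majWeightExcept_cast, majWeight_xorIdx, boole_xorIdx]
  ring

lemma exists_majWeightExcept_cast_eq_one (hK : Even K) {η : Fin K → Bool} (hη : ∃ j, η j = true) :
    ∃ k, (majWeightExcept η k : ZMod 2) = 1 := by
  simp only [majWeightExcept_cast]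
  rcases Nat.even_or_odd (majWeight η) with hw | hw
  · obtain ⟨j, hj⟩ := hη
    exact ⟨j, by simp [ZMod.natCast_eq_zero_iff_even.mpr hw, hj]⟩
  · obtain ⟨k, hk⟩ : ∃ k, η k = false := by
      by_contra! hall
      have hwK : majWeight η = K := by simp [majWeight, hall]
      exact Nat.not_even_iff_odd.mpr hw (by rwa [hwK])
    exact ⟨k, by simp [ZMod.natCast_eq_one_iff_odd.mpr hw, hk]⟩

lemma anticIdx_iff (γ ν : Fin K → Bool) :
    anticIdx γ ν = true ↔ ((majWeight γ * majWeight ν + majDot γ ν : ℕ) : ZMod 2) = 1 := by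
  have hle : majDot γ ν ≤ majWeight γ * majWeight ν := by
    have hγ : majDot γ ν ≤ majWeight γ := card_le_card fun j => by simp +contextual
    have hν : majDot γ ν ≤ majWeight ν := card_le_card fun j => by simp +contextual
    nlinarith [Nat.mul_le_mul hγ hν, Nat.le_mul_self (majDot γ ν)]
  rw [anticIdx, beq_iff_eq, ZMod.natCast_eq_one_iff_odd, Nat.odd_iff]
  omega

lemma anticIdx_xorIdx (γ μ : Fin K → Bool) : anticIdx γ (xorIdx γ μ) = anticIdx γ μ := by
  have hsq : ∀ x : ZMod 2, x * x + x = 0 := by decide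
  rw [Bool.eq_iff_iff, anticIdx_iff, anticIdx_iff]
  push_cast
  rw [majWeight_xorIdx, majDot_xorIdx, majDot_self]
  constructor
  · intro h; linear_combination h - hsq (majWeight γ)
  · intro h; linear_combination h + hsq (majWeight γ)

lemma sum_majWeightExcept (γ ν : Fin K → Bool) :
    ((∑ k ∈ univ.filter (fun k => γ k = true), majWeightExcept ν k : ℕ) : ZMod 2) =
      ((majWeight γ * majWeight ν + majDot γ ν : ℕ) : ZMod 2) := by
  push_cast
  rw [sum_congr rfl fun k _ => majWeightExcept_cast ν k, sum_add_distrib, sum_const, nsmul_eq_mul]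
  simp only [majDot, majWeight, natCast_card_filter (R := ZMod 2), sum_filter, ite_and]

end Parity

section Clifford

variable {d K : ℕ}

def majProd (m : Fin K → Matrix (Fin d) (Fin d) ℂ) (ν : Fin K → Bool) :
    Matrix (Fin d) (Fin d) ℂ :=
  ((List.finRange K).map fun j => if ν j then m j else 1).prod

lemma majMono_eq_smul_majProd (m : Fin K → Matrix (Fin d) (Fin d) ℂ) (ν : Fin K → Bool) :
    MajMono m ν = (Complex.I ^ (majWeight ν * (majWeight ν - 1) / 2)) • majProd m ν :=
  rfl

def CommutesLike (m : Fin K → Matrix (Fin d) (Fin d) ℂ) (η : Fin K → Bool)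
    (A : Matrix (Fin d) (Fin d) ℂ) : Prop :=
  ∀ k, m k * A = (-1 : ℂ) ^ majWeightExcept η k • (A * m k)

variable {m : Fin K → Matrix (Fin d) (Fin d) ℂ}

lemma CommutesLike.smul {η : Fin K → Bool} {A : Matrix (Fin d) (Fin d) ℂ}
    (hA : CommutesLike m η A) (c : ℂ) : CommutesLike m η (c • A) := fun k => by
  rw [mul_smul_comm, hA k, smul_comm, smul_mul_assoc]

lemma CommutesLike.mul {η η' : Fin K → Bool} {A B : Matrix (Fin d) (Fin d) ℂ}
    (hA : CommutesLike m η A) (hB : CommutesLike m η' B) :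
    CommutesLike m (xorIdx η η') (A * B) := fun k => by
  have hsign : ((majWeightExcept η k + majWeightExcept η' k : ℕ) : ZMod 2) =
      majWeightExcept (xorIdx η η') k := by
    push_cast; rw [majWeightExcept_xorIdx]
  rw [← mul_assoc, hA k, smul_mul_assoc, mul_assoc, hB k, mul_smul_comm, smul_smul, ← pow_add,
    neg_one_pow_congr_zmod_two hsign, mul_assoc]

lemma CommutesLike.trace_eq_zero (hsq : ∀ j, m j * m j = 1) (hK : Even K)
    {α β : Fin K → Bool} {A : Matrix (Fin d) (Fin d) ℂ} (hA : CommutesLike m (xorIdx α β) A)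
    (hne : α ≠ β) : A.trace = 0 := by
  obtain ⟨j, hj⟩ := Function.ne_iff.mp hne
  obtain ⟨k, hk⟩ := exists_majWeightExcept_cast_eq_one hK (η := xorIdx α β)
    ⟨j, by simpa [xorIdx] using hj⟩
  refine Matrix.trace_eq_zero_of_mul_eq_neg (hsq k) ?_
  rw [hA k, neg_one_pow_congr_zmod_two (b := 1) (by rw [hk]; simp), pow_one, neg_one_smul]

lemma commutesLike_majProd (hanti : ∀ j k, j ≠ k → m j * m k = -(m k * m j))
    (ν : Fin K → Bool) : CommutesLike m ν (majProd m ν) := fun k => by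
  have := mul_list_prod_eq_smul (m k) (fun j => if ν j then m j else 1)
    (fun j => if ν j = true ∧ j ≠ k then (-1 : ℂ) else 1) (List.finRange K) fun j _ => by
      by_cases hj : ν j = true
      · by_cases hjk : j = k
        · subst hjk; simp [hj]
        · simp [hj, hjk, hanti k j (Ne.symm hjk)]
      · simp [hj]
  rw [majProd, this, ← Fin.prod_univ_def, prod_ite, prod_const_one, mul_one, prod_const]
  rfl

lemma commutesLike_majMono (hanti : ∀ j k, j ≠ k → m j * m k = -(m k * m j))
    (ν : Fin K → Bool) : CommutesLike m ν (MajMono m ν) :=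
  (commutesLike_majProd hanti ν).smul _

lemma majMono_mul_comm_of_anticIdx (hanti : ∀ j k, j ≠ k → m j * m k = -(m k * m j))
    {γ ν : Fin K → Bool} (h : anticIdx γ ν = true) :
    MajMono m ν * MajMono m γ = -(MajMono m γ * MajMono m ν) := by
  have hswap : majProd m ν * majProd m γ = (-1 : ℂ) • (majProd m γ * majProd m ν) := by
    have := mul_list_prod_eq_smul (majProd m ν) (fun j => if γ j then m j else 1)
      (fun j => if γ j = true then (-1 : ℂ) ^ majWeightExcept ν j else 1) (List.finRange K)
      fun j _ => by
        by_cases hj : γ j = true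
        · simp only [hj, if_true]
          rw [commutesLike_majProd hanti ν j, smul_smul, ← pow_add, Even.neg_one_pow ⟨_, rfl⟩,
            one_smul]
        · simp [hj]
    change majProd m ν * majProd m γ = _ • (majProd m γ * majProd m ν) at this
    have hodd : ((∑ j ∈ univ.filter (fun j => γ j = true), majWeightExcept ν j : ℕ) : ZMod 2) =
        (1 : ℕ) := by
      rw [sum_majWeightExcept, (anticIdx_iff γ ν).mp h, Nat.cast_one]
    rw [this, ← Fin.prod_univ_def, ← prod_filter, prod_pow_eq_pow_sum,
      neg_one_pow_congr_zmod_two hodd, pow_one]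
  rw [majMono_eq_smul_majProd m γ, majMono_eq_smul_majProd m ν, smul_mul_smul_comm,
    smul_mul_smul_comm, hswap]
  module

lemma trace_majMono_mul_majMono (hsq : ∀ j, m j * m j = 1)
    (hanti : ∀ j k, j ≠ k → m j * m k = -(m k * m j)) (hK : Even K) {μ ν : Fin K → Bool}
    (hne : μ ≠ ν) : (MajMono m μ * MajMono m ν).trace = 0 :=
  ((commutesLike_majMono hanti μ).mul (commutesLike_majMono hanti ν)).trace_eq_zero hsq hK hne

lemma trace_majMono_mul_majMono_mul_majMono (hsq : ∀ j, m j * m j = 1)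
    (hanti : ∀ j k, j ≠ k → m j * m k = -(m k * m j)) (hK : Even K) {α β δ : Fin K → Bool}
    (hne : xorIdx α β ≠ δ) : (MajMono m α * MajMono m β * MajMono m δ).trace = 0 :=
  (((commutesLike_majMono hanti α).mul (commutesLike_majMono hanti β)).mul
    (commutesLike_majMono hanti δ)).trace_eq_zero hsq hK hne

lemma trace_schrStep_mul_majMono (hsq : ∀ j, m j * m j = 1)
    (hanti : ∀ j k, j ≠ k → m j * m k = -(m k * m j)) (hK : Even K) (γ : Fin K → Bool) (θ : ℝ)
    {S : Finset (Fin K → Bool)} {μ ν : Fin K → Bool} (hμ : μ ∈ S) (hν : ν ∈ S) :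
    (schrStep m γ θ S μ * MajMono m ν).trace = (MajMono m μ * heisStep m γ θ S ν).trace := by
  have htwo := trace_majMono_mul_majMono hsq hanti hK (μ := μ) (ν := ν)
  have hthree :=
    trace_majMono_mul_majMono_mul_majMono hsq hanti hK (α := γ) (β := μ) (δ := ν)
  unfold schrStep heisStep
  by_cases ha : anticIdx γ μ = true <;> by_cases hb : anticIdx γ ν = true
  · set t := (MajMono m γ * MajMono m μ * MajMono m ν).trace with ht
    have hS : (if xorIdx γ μ ∈ S then (1 : ℂ) else 0) * t =
        (if xorIdx γ ν ∈ S then (1 : ℂ) else 0) * t := by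
      by_cases hx : xorIdx γ μ = ν
      · rw [if_pos (hx ▸ hν), if_pos (by rwa [← hx, xorIdx_xorIdx_cancel_left])]
      · rw [hthree hx, mul_zero, mul_zero]
    have hswap : MajMono m μ * (MajMono m γ * MajMono m ν) =
        -(MajMono m γ * MajMono m μ * MajMono m ν) := by
      rw [← mul_assoc, majMono_mul_comm_of_anticIdx hanti ha, neg_mul]
    simp only [ha, hb, if_true, sub_mul, mul_add, smul_mul_assoc, mul_smul_comm,
      Matrix.trace_sub, Matrix.trace_add, Matrix.trace_smul, hswap, Matrix.trace_neg, ← ht,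
      smul_eq_mul]
    linear_combination (-(Complex.I * (Real.sin θ : ℂ))) * hS
  · have hne : μ ≠ ν := fun h => hb (h ▸ ha)
    have hx : xorIdx γ μ ≠ ν := fun h => hb (by rwa [← h, anticIdx_xorIdx])
    rw [if_pos ha, if_neg hb, sub_mul, smul_mul_assoc, smul_mul_assoc, Matrix.trace_sub,
      Matrix.trace_smul, Matrix.trace_smul, htwo hne, hthree hx]
    simp
  · have hne : μ ≠ ν := fun h => ha (h ▸ hb)
    have hx : xorIdx μ γ ≠ ν := fun h => ha (by rwa [← anticIdx_xorIdx, xorIdx_comm, h])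
    rw [if_neg ha, if_pos hb, mul_add, mul_smul_comm, mul_smul_comm, Matrix.trace_add,
      Matrix.trace_smul, Matrix.trace_smul, ← mul_assoc, htwo hne,
      trace_majMono_mul_majMono_mul_majMono hsq hanti hK hx]
    simp
  · simp [ha, hb]

end Clifford

/-- Equivalence of Heisenberg and Schrödinger truncated propagation: for a retained set `S`
closed under the branching rules (the observable `H = Σ h_ν M_ν` and state `ρ = Σ r_μ M_μ`
are supported in `S`), the truncated single-gate superoperators are mutually adjoint:
`Tr[T_Schr(ρ) · H] = Tr[ρ · T_Heis(H)]`. -/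
theorem stmt19 {N : ℕ} (m : Fin (2 * N) → Matrix (Fin (2 ^ N)) (Fin (2 ^ N)) ℂ)
    (hcl : ∀ j k, m j * m k + m k * m j =
      if j = k then (2 : ℂ) • (1 : Matrix (Fin (2 ^ N)) (Fin (2 ^ N)) ℂ) else 0)
    (γ : Fin (2 * N) → Bool) (θ : ℝ) (S : Finset (Fin (2 * N) → Bool))
    (h r : (Fin (2 * N) → Bool) → ℝ)
    (hh : ∀ ν, h ν ≠ 0 → ν ∈ S) (hr : ∀ ν, r ν ≠ 0 → ν ∈ S) :
    Matrix.trace ((∑ μ, (r μ : ℂ) • schrStep m γ θ S μ) * (∑ ν, (h ν : ℂ) • MajMono m ν)) =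
      Matrix.trace ((∑ μ, (r μ : ℂ) • MajMono m μ) * (∑ ν, (h ν : ℂ) • heisStep m γ θ S ν)) := by
  have hsq (j) : m j * m j = 1 := by
    simpa [← two_smul ℂ] using hcl j j
  have hanti (j k) (hjk : j ≠ k) : m j * m k = -(m k * m j) :=
    eq_neg_of_add_eq_zero_left (by simpa [hjk] using hcl j k)
  simp only [sum_mul, mul_sum, Matrix.trace_sum, smul_mul_smul_comm, Matrix.trace_smul]
  refine sum_congr rfl fun ν _ => sum_congr rfl fun μ _ => ?_
  by_cases hrμ : r μ = 0
  · simp [hrμ]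
  by_cases hhν : h ν = 0
  · simp [hhν]
  rw [trace_schrStep_mul_majMono hsq hanti (even_two_mul N) γ θ (hr μ hrμ) (hh ν hhν)]
end
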